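/- (Helleseth–Kløve–Levenshtein bound, k=1 general form) If C ⊂ F_q^n has all pairwise inner products of distinct points in [ℓ, s] and the quadratic f(t) = (t-ℓ)(t-s) has nonnegative Krawtchouk coefficients f_1, f_2 and positive f_0, then |C| ≤ L/(L + 4(q-1)(1-n) + 2nq(q-1)(s+ℓ)), where L = nq²(1-s)(1-ℓ), provided the denominator is positive. -/
import Mathlib


/-- The polynomial binomial coefficient `binom(z, j) = z(z-1)⋯(z-j+1)/j!`. -/
noncomputable def binomPoly (z : ℝ) (j : ℕ) : ℝ :=
  (∏ i ∈ Finset.range j, (z - i)) / (Nat.factorial j)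

/-- The (usual) Krawtchouk polynomial `K_i^{(n,q)}(z)`. -/
noncomputable def kraw (n q i : ℕ) (z : ℝ) : ℝ :=
  ∑ j ∈ Finset.range (i + 1),
    (-1 : ℝ) ^ j * ((q : ℝ) - 1) ^ (i - j) * binomPoly z j * binomPoly ((n : ℝ) - z) (i - j)

/-- The normalized Krawtchouk polynomial `Q_i(t) = K_i^{(n,q)}(n(1-t)/2)/r_i`. -/
noncomputable def krawQ (n q i : ℕ) (t : ℝ) : ℝ :=
  kraw n q i ((n : ℝ) * (1 - t) / 2) / (((q : ℝ) - 1) ^ i * (n.choose i))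

/-- The "inner product" `⟨x,y⟩ = 1 - 2 d(x,y)/n` of two words of `F_q^n`. -/
noncomputable def innerProd (n q : ℕ) (x y : Fin n → Fin q) : ℝ :=
  1 - 2 * (hammingDist x y : ℝ) / (n : ℝ)

section Aux


lemma binomPoly_zero (z : ℝ) : binomPoly z 0 = 1 := by simp [binomPoly]

lemma binomPoly_one (z : ℝ) : binomPoly z 1 = z := by
  simp [binomPoly, Finset.prod_range_one]

lemma binomPoly_two (z : ℝ) : binomPoly z 2 = z * (z - 1) / 2 := by
  simp [binomPoly, Finset.prod_range_succ, Nat.factorial]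

lemma kraw_one (n q : ℕ) (z : ℝ) :
    kraw n q 1 z = ((q : ℝ) - 1) * ((n : ℝ) - z) - z := by
  simp [kraw, Finset.sum_range_succ, binomPoly_zero, binomPoly_one]
  ring

lemma kraw_two (n q : ℕ) (z : ℝ) :
    kraw n q 2 z = ((q : ℝ) - 1) ^ 2 * ((n : ℝ) - z) * ((n : ℝ) - z - 1) / 2
      - ((q : ℝ) - 1) * z * ((n : ℝ) - z) + z * (z - 1) / 2 := by
  simp [kraw, Finset.sum_range_succ, binomPoly_zero, binomPoly_one, binomPoly_two]
  ring

lemma krawQ_one_clear (n q : ℕ) (hn : 2 ≤ n) (hq : 2 ≤ q) (t : ℝ) :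
    krawQ n q 1 t * (2 * ((q : ℝ) - 1)) = (q : ℝ) * t + (q : ℝ) - 2 := by
  have hn0 : (n : ℝ) ≠ 0 := by
    have : (2 : ℝ) ≤ n := by exact_mod_cast hn
    nlinarith
  have hq1 : (q : ℝ) - 1 ≠ 0 := by
    have : (2 : ℝ) ≤ q := by exact_mod_cast hq
    nlinarith
  rw [krawQ, kraw_one]
  simp only [Nat.choose_one_right]
  field_simp
  ring

lemma krawQ_two_clear (n q : ℕ) (hn : 2 ≤ n) (hq : 2 ≤ q) (t : ℝ) :
    krawQ n q 2 t * (4 * ((q : ℝ) - 1) ^ 2 * ((n : ℝ) - 1)) =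
      (n : ℝ) * (q : ℝ) ^ 2 * t ^ 2 + 2 * ((n : ℝ) - 1) * (q : ℝ) * ((q : ℝ) - 2) * t
        + (n : ℝ) * ((q : ℝ) - 2) ^ 2 - 2 * ((q : ℝ) ^ 2 - 2 * (q : ℝ) + 2) := by
  have hn0 : (n : ℝ) ≠ 0 := by
    have : (2 : ℝ) ≤ n := by exact_mod_cast hn
    nlinarith
  have hn1 : (n : ℝ) - 1 ≠ 0 := by
    have : (2 : ℝ) ≤ n := by exact_mod_cast hn
    nlinarith
  have hq1 : (q : ℝ) - 1 ≠ 0 := by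
    have : (2 : ℝ) ≤ q := by exact_mod_cast hq
    nlinarith
  rw [krawQ, kraw_two, Nat.cast_choose_two]
  field_simp
  ring

noncomputable def vv (q : ℕ) (c a : Fin q) : ℝ := (q : ℝ) * (if c = a then 1 else 0) - 1

lemma vv_ortho (q : ℕ) (c d : Fin q) :
    ∑ a : Fin q, vv q c a * vv q d a = (q : ℝ) * ((q : ℝ) * (if c = d then 1 else 0) - 1) := by
  have expand : ∀ a : Fin q, vv q c a * vv q d a
      = (q : ℝ)^2 * (if c = a then (if d = a then (1:ℝ) else 0) else 0)
        - (q : ℝ) * (if c = a then 1 else 0) - (q : ℝ) * (if d = a then 1 else 0) + 1 := by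
    intro a; unfold vv; split_ifs <;> ring
  simp only [expand]
  rw [Finset.sum_add_distrib, Finset.sum_sub_distrib, Finset.sum_sub_distrib,
    ← Finset.mul_sum, ← Finset.mul_sum, ← Finset.mul_sum]
  rw [Finset.sum_ite_eq, Finset.sum_ite_eq, Finset.sum_ite_eq]
  have hcard : ∑ _a : Fin q, (1 : ℝ) = q := by simp
  rw [hcard]
  rcases eq_or_ne c d with h | h
  · subst h; simp; ring
  · simp [h, h.symm]

lemma sum_sq_swap {α β : Type*} [Fintype β] (C : Finset α) (g : α → β → ℝ) :
    ∑ a : β, (∑ x ∈ C, g x a) ^ 2 = ∑ x ∈ C, ∑ y ∈ C, (∑ a : β, g x a * g y a) := by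
  simp_rw [sq, Finset.sum_mul_sum]
  rw [Finset.sum_comm]
  exact Finset.sum_congr rfl fun x _ => by rw [Finset.sum_comm]

lemma pair_pos (n q : ℕ) (hq : 0 < q) (C : Finset (Fin n → Fin q)) (i j : Fin n) :
    0 ≤ ∑ x ∈ C, ∑ y ∈ C,
      (((q:ℝ) * (if x i = y i then 1 else 0) - 1) * ((q:ℝ) * (if x j = y j then 1 else 0) - 1)) := by
  have hq2 : (0:ℝ) < (q : ℝ)^2 := by positivity
  set g : (Fin n → Fin q) → Fin q × Fin q → ℝ :=
    fun x p => vv q (x i) p.1 * vv q (x j) p.2 with hg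
  have key : ∀ x y : Fin n → Fin q,
      (∑ p : Fin q × Fin q, g x p * g y p)
      = (q:ℝ)^2 * (((q:ℝ) * (if x i = y i then 1 else 0) - 1)
          * ((q:ℝ) * (if x j = y j then 1 else 0) - 1)) := by
    intro x y
    have h1 : ∑ p : Fin q × Fin q, g x p * g y p
        = (∑ a : Fin q, vv q (x i) a * vv q (y i) a) * (∑ b : Fin q, vv q (x j) b * vv q (y j) b) := by
      rw [Finset.sum_mul_sum, ← Finset.sum_product']
      exact Finset.sum_congr rfl fun p _ => by simp only [hg]; ring
    rw [h1, vv_ortho, vv_ortho]; ring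
  have h3 : ∑ x ∈ C, ∑ y ∈ C, (∑ p : Fin q × Fin q, g x p * g y p)
      = (q:ℝ)^2 * ∑ x ∈ C, ∑ y ∈ C,
        (((q:ℝ) * (if x i = y i then 1 else 0) - 1) * ((q:ℝ) * (if x j = y j then 1 else 0) - 1)) := by
    rw [Finset.mul_sum]
    exact Finset.sum_congr rfl fun x _ => by
      rw [Finset.mul_sum]; exact Finset.sum_congr rfl fun y _ => key x y
  have h2 : (0:ℝ) ≤ ∑ x ∈ C, ∑ y ∈ C, (∑ p : Fin q × Fin q, g x p * g y p) := by
    rw [← sum_sq_swap C g]; positivity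
  rw [h3] at h2
  exact nonneg_of_mul_nonneg_right h2 hq2

lemma single_pos (n q : ℕ) (hq : 0 < q) (C : Finset (Fin n → Fin q)) (i : Fin n) :
    0 ≤ ∑ x ∈ C, ∑ y ∈ C, ((q:ℝ) * (if x i = y i then 1 else 0) - 1) := by
  have hq2 : (0:ℝ) < (q : ℝ) := by positivity
  set g : (Fin n → Fin q) → Fin q → ℝ := fun x a => vv q (x i) a with hg
  have h3 : ∑ x ∈ C, ∑ y ∈ C, (∑ a : Fin q, g x a * g y a)
      = (q:ℝ) * ∑ x ∈ C, ∑ y ∈ C, ((q:ℝ) * (if x i = y i then 1 else 0) - 1) := by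
    rw [Finset.mul_sum]
    exact Finset.sum_congr rfl fun x _ => by
      rw [Finset.mul_sum]; exact Finset.sum_congr rfl fun y _ => vv_ortho q (x i) (y i)
  have h2 : (0:ℝ) ≤ ∑ x ∈ C, ∑ y ∈ C, (∑ a : Fin q, g x a * g y a) := by
    rw [← sum_sq_swap C g]; positivity
  rw [h3] at h2
  exact nonneg_of_mul_nonneg_right h2 hq2

lemma agree_card (n q : ℕ) (x y : Fin n → Fin q) :
    (Finset.univ.filter fun i => x i = y i).card = n - hammingDist x y := by
  have h := Finset.card_filter_add_card_filter_not
    (s := (Finset.univ : Finset (Fin n))) (p := fun i => x i = y i)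
  simp only [Finset.card_univ, Fintype.card_fin] at h
  have hd : hammingDist x y = (Finset.univ.filter fun i => ¬ x i = y i).card := rfl
  omega

lemma sum_u (n q : ℕ) (x y : Fin n → Fin q) :
    ∑ i : Fin n, ((q:ℝ) * (if x i = y i then 1 else 0) - 1)
      = (q:ℝ) * (n:ℝ) - (q:ℝ) * (hammingDist x y : ℝ) - (n:ℝ) := by
  have hle : hammingDist x y ≤ n := by
    simpa using hammingDist_le_card_fintype (x := x) (y := y)
  rw [Finset.sum_sub_distrib, ← Finset.mul_sum]
  rw [Finset.sum_boole]
  rw [agree_card, Nat.cast_sub hle]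
  simp [Finset.card_univ]
  ring

lemma sum_u_sq (n q : ℕ) (x y : Fin n → Fin q) :
    ∑ i : Fin n, ((q:ℝ) * (if x i = y i then 1 else 0) - 1) ^ 2
      = ((q:ℝ) - 1)^2 * ((n:ℝ) - (hammingDist x y : ℝ)) + (hammingDist x y : ℝ) := by
  have hle : hammingDist x y ≤ n := by
    simpa using hammingDist_le_card_fintype (x := x) (y := y)
  have expand : ∀ i : Fin n, ((q:ℝ) * (if x i = y i then 1 else 0) - 1) ^ 2
      = if x i = y i then ((q:ℝ)-1)^2 else 1 := by
    intro i; split_ifs <;> ring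
  simp only [expand]
  rw [Finset.sum_ite, Finset.sum_const, Finset.sum_const, agree_card]
  have hd : (Finset.univ.filter fun i => ¬ x i = y i).card = hammingDist x y := rfl
  rw [hd]
  rw [nsmul_eq_mul, nsmul_eq_mul, Nat.cast_sub hle]
  ring

lemma krawQ_one_ip (n q : ℕ) (hn : 2 ≤ n) (hq : 2 ≤ q) (x y : Fin n → Fin q) :
    krawQ n q 1 (innerProd n q x y) * (((q:ℝ) - 1) * (n:ℝ))
      = ∑ i : Fin n, ((q:ℝ) * (if x i = y i then 1 else 0) - 1) := by
  have hn0 : (n : ℝ) ≠ 0 := by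
    have : (2 : ℝ) ≤ n := by exact_mod_cast hn
    nlinarith
  rw [innerProd]
  have h := krawQ_one_clear n q hn hq (1 - 2 * (hammingDist x y : ℝ) / (n:ℝ))
  set d : ℝ := (hammingDist x y : ℝ) with hdd
  have haux : ((q:ℝ) * (1 - 2 * d / (n:ℝ)) + (q:ℝ) - 2) * (n:ℝ)
      = 2 * ((q:ℝ) * (n:ℝ) - (q:ℝ) * d - (n:ℝ)) := by
    field_simp
    ring
  rw [sum_u]
  linear_combination ((n:ℝ)/2) * h + (1/2) * haux

lemma krawQ_two_ip (n q : ℕ) (hn : 2 ≤ n) (hq : 2 ≤ q) (x y : Fin n → Fin q) :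
    krawQ n q 2 (innerProd n q x y) * (((q:ℝ) - 1)^2 * (n:ℝ) * ((n:ℝ) - 1))
      = (∑ i : Fin n, ((q:ℝ) * (if x i = y i then 1 else 0) - 1)) ^ 2
        - ∑ i : Fin n, ((q:ℝ) * (if x i = y i then 1 else 0) - 1) ^ 2 := by
  have hn0 : (n : ℝ) ≠ 0 := by
    have : (2 : ℝ) ≤ n := by exact_mod_cast hn
    nlinarith
  rw [innerProd]
  have h := krawQ_two_clear n q hn hq (1 - 2 * (hammingDist x y : ℝ) / (n:ℝ))
  set d : ℝ := (hammingDist x y : ℝ) with hdd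
  have haux : ((n:ℝ) * (q:ℝ)^2 * (1 - 2*d/(n:ℝ))^2 + 2*((n:ℝ)-1)*(q:ℝ)*((q:ℝ)-2)*(1 - 2*d/(n:ℝ))
        + (n:ℝ)*((q:ℝ)-2)^2 - 2*((q:ℝ)^2 - 2*(q:ℝ) + 2)) * (n:ℝ)
      = 4 * (((q:ℝ)*(n:ℝ) - (q:ℝ)*d - (n:ℝ))^2 - (((q:ℝ)-1)^2*((n:ℝ) - d) + d)) := by
    field_simp
    ring
  rw [sum_u, sum_u_sq]
  linear_combination ((n:ℝ)/4) * h + (1/4) * haux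

lemma triple_swap {α : Type*} (C : Finset α) (n : ℕ) (w : α → α → Fin n → ℝ) :
    ∑ x ∈ C, ∑ y ∈ C, ∑ i : Fin n, w x y i = ∑ i : Fin n, ∑ x ∈ C, ∑ y ∈ C, w x y i := by
  calc ∑ x ∈ C, ∑ y ∈ C, ∑ i : Fin n, w x y i
      = ∑ x ∈ C, ∑ i : Fin n, ∑ y ∈ C, w x y i :=
        Finset.sum_congr rfl fun x _ => by rw [Finset.sum_comm]
    _ = ∑ i : Fin n, ∑ x ∈ C, ∑ y ∈ C, w x y i := by rw [Finset.sum_comm]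

end Aux

set_option maxHeartbeats 1000000 in
/-- (Helleseth–Kløve–Levenshtein bound, `k = 1`, general form) If `C ⊂ F_q^n` has all
pairwise inner products of distinct points in `[ℓ, s]` and the quadratic
`f(t) = (t-ℓ)(t-s)` has Krawtchouk expansion `f = f_0 + f_1 Q_1 + f_2 Q_2` with
`f_0 > 0`, `f_1 ≥ 0`, `f_2 ≥ 0`, then
`|C| ≤ L/(L + 4(q-1)(1-n) + 2nq(q-1)(s+ℓ))` where `L = nq²(1-s)(1-ℓ)`,
provided the denominator is positive. -/
theorem hkl_bound (n q : ℕ) (hn : 2 ≤ n) (hq : 2 ≤ q) (ℓ s : ℝ)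
    (C : Finset (Fin n → Fin q))
    (hC : ∀ x ∈ C, ∀ y ∈ C, x ≠ y → innerProd n q x y ∈ Set.Icc ℓ s)
    (hf : ∃ f0 f1 f2 : ℝ, 0 < f0 ∧ 0 ≤ f1 ∧ 0 ≤ f2 ∧
      ∀ t : ℝ, (t - ℓ) * (t - s) = f0 + f1 * krawQ n q 1 t + f2 * krawQ n q 2 t)
    (hden : 0 < (n : ℝ) * (q : ℝ) ^ 2 * (1 - s) * (1 - ℓ) +
        4 * ((q : ℝ) - 1) * (1 - (n : ℝ)) +
        2 * (n : ℝ) * (q : ℝ) * ((q : ℝ) - 1) * (s + ℓ)) :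
    (C.card : ℝ) ≤ (n : ℝ) * (q : ℝ) ^ 2 * (1 - s) * (1 - ℓ) /
      ((n : ℝ) * (q : ℝ) ^ 2 * (1 - s) * (1 - ℓ) +
        4 * ((q : ℝ) - 1) * (1 - (n : ℝ)) +
        2 * (n : ℝ) * (q : ℝ) * ((q : ℝ) - 1) * (s + ℓ)) := by
  obtain ⟨f0, f1, f2, hf0, hf1, hf2, hid⟩ := hf
  have hq0 : 0 < q := by omega
  have hn2 : (2:ℝ) ≤ (n:ℝ) := by exact_mod_cast hn
  have hq2 : (2:ℝ) ≤ (q:ℝ) := by exact_mod_cast hq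
  have hn0 : (n:ℝ) ≠ 0 := by nlinarith
  have hn1 : (n:ℝ) - 1 ≠ 0 := by nlinarith
  have hq1 : (q:ℝ) - 1 ≠ 0 := by nlinarith
  have hq1pos : (0:ℝ) < (q:ℝ) - 1 := by nlinarith
  have hnpos : (0:ℝ) < (n:ℝ) := by nlinarith
  have hn1pos : (0:ℝ) < (n:ℝ) - 1 := by nlinarith
  -- cleared Krawtchouk identity
  have hideq : ∀ t : ℝ, ((t-ℓ)*(t-s)) * (4*((q:ℝ)-1)^2*((n:ℝ)-1))
      = f0*(4*((q:ℝ)-1)^2*((n:ℝ)-1))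
        + f1*((q:ℝ)*t+(q:ℝ)-2)*(2*((q:ℝ)-1)*((n:ℝ)-1))
        + f2*((n:ℝ)*(q:ℝ)^2*t^2 + 2*((n:ℝ)-1)*(q:ℝ)*((q:ℝ)-2)*t
            + (n:ℝ)*((q:ℝ)-2)^2 - 2*((q:ℝ)^2-2*(q:ℝ)+2)) := by
    intro t
    have h1 := krawQ_one_clear n q hn hq t
    have h2 := krawQ_two_clear n q hn hq t
    linear_combination (4*((q:ℝ)-1)^2*((n:ℝ)-1)) * hid t
      + (f1*2*((q:ℝ)-1)*((n:ℝ)-1)) * h1 + f2 * h2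
  have hf2v : f2 * ((n:ℝ)*(q:ℝ)^2) = 4*((q:ℝ)-1)^2*((n:ℝ)-1) := by
    linear_combination (-(1:ℝ)/2)*(hideq 1) + (-(1:ℝ)/2)*(hideq (-1)) + hideq 0
  have hf1v : f1 * (4*(q:ℝ)*((q:ℝ)-1)*((n:ℝ)-1))
      = -8*((q:ℝ)-1)^2*((n:ℝ)-1)*(ℓ+s) - 4*((n:ℝ)-1)*(q:ℝ)*((q:ℝ)-2)*f2 := by
    linear_combination (-(1:ℝ))*(hideq 1) + hideq (-1)
  have hW : (4*(q:ℝ)*((q:ℝ)-1)^2*((n:ℝ)-1)) ≠ 0 := by positivity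
  have hval : f0 * ((n:ℝ)*(q:ℝ)^2)
      = (n : ℝ) * (q : ℝ) ^ 2 * (1 - s) * (1 - ℓ) + 4 * ((q : ℝ) - 1) * (1 - (n : ℝ)) +
        2 * (n : ℝ) * (q : ℝ) * ((q : ℝ) - 1) * (s + ℓ) := by
    apply mul_right_cancel₀ hW
    linear_combination (-(n:ℝ)*(q:ℝ)^3)*(hideq 1) + (-(n:ℝ)*(q:ℝ)^2*((q:ℝ)-1))*hf1v
      + (-4*(q:ℝ)*((q:ℝ)-1)*((n:ℝ)-1))*hf2v
  -- value at t = 1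
  have hQ1one : krawQ n q 1 1 = 1 := by
    apply mul_right_cancel₀ (show (2*((q:ℝ)-1)) ≠ 0 by positivity)
    linear_combination krawQ_one_clear n q hn hq 1
  have hQ2one : krawQ n q 2 1 = 1 := by
    apply mul_right_cancel₀ (show (4*((q:ℝ)-1)^2*((n:ℝ)-1)) ≠ 0 by positivity)
    linear_combination krawQ_two_clear n q hn hq 1
  have h1eq : (1-ℓ)*(1-s) = f0 + f1 + f2 := by
    have h := hid 1
    rw [hQ1one, hQ2one] at h
    linarith
  have hf1pos : (0:ℝ) < (1-ℓ)*(1-s) := by rw [h1eq]; linarith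
  -- positivity of the two Krawtchouk sums
  have hS1 : 0 ≤ ∑ x ∈ C, ∑ y ∈ C, krawQ n q 1 (innerProd n q x y) := by
    have e : ∑ x ∈ C, ∑ y ∈ C, krawQ n q 1 (innerProd n q x y) * (((q:ℝ)-1)*(n:ℝ))
        = ∑ i : Fin n, ∑ x ∈ C, ∑ y ∈ C, ((q:ℝ) * (if x i = y i then 1 else 0) - 1) := by
      rw [← triple_swap C n (fun x y i => ((q:ℝ) * (if x i = y i then 1 else 0) - 1))]
      exact Finset.sum_congr rfl fun x _ => Finset.sum_congr rfl fun y _ =>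
        krawQ_one_ip n q hn hq x y
    have hpos : (0:ℝ) ≤ ∑ x ∈ C, ∑ y ∈ C, krawQ n q 1 (innerProd n q x y) * (((q:ℝ)-1)*(n:ℝ)) := by
      rw [e]
      exact Finset.sum_nonneg fun i _ => single_pos n q hq0 C i
    rw [show ∑ x ∈ C, ∑ y ∈ C, krawQ n q 1 (innerProd n q x y) * (((q:ℝ)-1)*(n:ℝ))
        = (((q:ℝ)-1)*(n:ℝ)) * ∑ x ∈ C, ∑ y ∈ C, krawQ n q 1 (innerProd n q x y) by
      rw [Finset.mul_sum]
      exact Finset.sum_congr rfl fun x _ => by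
        rw [Finset.mul_sum]
        exact Finset.sum_congr rfl fun y _ => mul_comm _ _] at hpos
    exact nonneg_of_mul_nonneg_right hpos (by positivity)
  have hS2 : 0 ≤ ∑ x ∈ C, ∑ y ∈ C, krawQ n q 2 (innerProd n q x y) := by
    have e : ∑ x ∈ C, ∑ y ∈ C, krawQ n q 2 (innerProd n q x y) * (((q:ℝ)-1)^2*(n:ℝ)*((n:ℝ)-1))
        = ∑ x ∈ C, ∑ y ∈ C,
            ((∑ i : Fin n, ((q:ℝ) * (if x i = y i then 1 else 0) - 1)) ^ 2
              - ∑ i : Fin n, ((q:ℝ) * (if x i = y i then 1 else 0) - 1) ^ 2) :=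
      Finset.sum_congr rfl fun x _ => Finset.sum_congr rfl fun y _ =>
        krawQ_two_ip n q hn hq x y
    have key : (0:ℝ) ≤ ∑ x ∈ C, ∑ y ∈ C,
        ((∑ i : Fin n, ((q:ℝ) * (if x i = y i then 1 else 0) - 1)) ^ 2
          - ∑ i : Fin n, ((q:ℝ) * (if x i = y i then 1 else 0) - 1) ^ 2) := by
      have expand : ∀ x y : Fin n → Fin q,
          (∑ i : Fin n, ((q:ℝ) * (if x i = y i then 1 else 0) - 1)) ^ 2
              - ∑ i : Fin n, ((q:ℝ) * (if x i = y i then 1 else 0) - 1) ^ 2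
          = ∑ i : Fin n, (∑ j : Fin n,
              (((q:ℝ) * (if x i = y i then 1 else 0) - 1) * ((q:ℝ) * (if x j = y j then 1 else 0) - 1))
              - ((q:ℝ) * (if x i = y i then 1 else 0) - 1) ^ 2) := by
        intro x y
        rw [sq, Finset.sum_mul_sum, ← Finset.sum_sub_distrib]
      calc (0:ℝ) ≤ ∑ i : Fin n, ∑ x ∈ C, ∑ y ∈ C, (∑ j : Fin n,
              (((q:ℝ) * (if x i = y i then 1 else 0) - 1) * ((q:ℝ) * (if x j = y j then 1 else 0) - 1))
              - ((q:ℝ) * (if x i = y i then 1 else 0) - 1) ^ 2) := by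
            apply Finset.sum_nonneg
            intro i _
            have swap2 : ∑ x ∈ C, ∑ y ∈ C, (∑ j : Fin n,
                (((q:ℝ) * (if x i = y i then 1 else 0) - 1) * ((q:ℝ) * (if x j = y j then 1 else 0) - 1))
                - ((q:ℝ) * (if x i = y i then 1 else 0) - 1) ^ 2)
              = (∑ j : Fin n, ∑ x ∈ C, ∑ y ∈ C,
                  (((q:ℝ) * (if x i = y i then 1 else 0) - 1) * ((q:ℝ) * (if x j = y j then 1 else 0) - 1)))
                - ∑ x ∈ C, ∑ y ∈ C, ((q:ℝ) * (if x i = y i then 1 else 0) - 1) ^ 2 := by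
              rw [← triple_swap C n (fun x y j =>
                (((q:ℝ) * (if x i = y i then 1 else 0) - 1) * ((q:ℝ) * (if x j = y j then 1 else 0) - 1)))]
              rw [← Finset.sum_sub_distrib]
              exact Finset.sum_congr rfl fun x _ => by rw [← Finset.sum_sub_distrib]
            rw [swap2]
            have hsplit : ∑ j : Fin n, ∑ x ∈ C, ∑ y ∈ C,
                (((q:ℝ) * (if x i = y i then 1 else 0) - 1) * ((q:ℝ) * (if x j = y j then 1 else 0) - 1))
              = (∑ j ∈ Finset.univ.erase i, ∑ x ∈ C, ∑ y ∈ C,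
                  (((q:ℝ) * (if x i = y i then 1 else 0) - 1) * ((q:ℝ) * (if x j = y j then 1 else 0) - 1)))
                + ∑ x ∈ C, ∑ y ∈ C, (((q:ℝ) * (if x i = y i then 1 else 0) - 1)
                    * ((q:ℝ) * (if x i = y i then 1 else 0) - 1)) := by
              rw [Finset.sum_erase_add _ _ (Finset.mem_univ i)]
            rw [hsplit]
            have h1 : 0 ≤ ∑ j ∈ Finset.univ.erase i, ∑ x ∈ C, ∑ y ∈ C,
                (((q:ℝ) * (if x i = y i then 1 else 0) - 1) * ((q:ℝ) * (if x j = y j then 1 else 0) - 1)) :=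
              Finset.sum_nonneg fun j _ => pair_pos n q hq0 C i j
            have h2 : ∑ x ∈ C, ∑ y ∈ C, (((q:ℝ) * (if x i = y i then 1 else 0) - 1)
                    * ((q:ℝ) * (if x i = y i then 1 else 0) - 1))
                = ∑ x ∈ C, ∑ y ∈ C, ((q:ℝ) * (if x i = y i then 1 else 0) - 1) ^ 2 :=
              Finset.sum_congr rfl fun x _ => Finset.sum_congr rfl fun y _ => (sq _).symm
            rw [h2]
            linarith
        _ = ∑ x ∈ C, ∑ y ∈ C,
            ((∑ i : Fin n, ((q:ℝ) * (if x i = y i then 1 else 0) - 1)) ^ 2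
              - ∑ i : Fin n, ((q:ℝ) * (if x i = y i then 1 else 0) - 1) ^ 2) := by
            rw [← triple_swap]
            exact Finset.sum_congr rfl fun x _ => Finset.sum_congr rfl fun y _ => (expand x y).symm
    have hpos : (0:ℝ) ≤ ∑ x ∈ C, ∑ y ∈ C,
        krawQ n q 2 (innerProd n q x y) * (((q:ℝ)-1)^2*(n:ℝ)*((n:ℝ)-1)) := by rw [e]; exact key
    rw [show ∑ x ∈ C, ∑ y ∈ C, krawQ n q 2 (innerProd n q x y) * (((q:ℝ)-1)^2*(n:ℝ)*((n:ℝ)-1))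
        = (((q:ℝ)-1)^2*(n:ℝ)*((n:ℝ)-1)) * ∑ x ∈ C, ∑ y ∈ C, krawQ n q 2 (innerProd n q x y) by
      rw [Finset.mul_sum]
      exact Finset.sum_congr rfl fun x _ => by
        rw [Finset.mul_sum]
        exact Finset.sum_congr rfl fun y _ => mul_comm _ _] at hpos
    exact nonneg_of_mul_nonneg_right hpos (by positivity)
  -- lower bound on G
  have hGlow : f0 * (C.card:ℝ) * (C.card:ℝ)
      ≤ ∑ x ∈ C, ∑ y ∈ C, (innerProd n q x y - ℓ) * (innerProd n q x y - s) := by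
    have hGid : ∑ x ∈ C, ∑ y ∈ C, (innerProd n q x y - ℓ) * (innerProd n q x y - s)
        = f0 * (C.card:ℝ) * (C.card:ℝ)
          + f1 * (∑ x ∈ C, ∑ y ∈ C, krawQ n q 1 (innerProd n q x y))
          + f2 * (∑ x ∈ C, ∑ y ∈ C, krawQ n q 2 (innerProd n q x y)) := by
      have inner : ∀ x : Fin n → Fin q, ∑ y ∈ C, (innerProd n q x y - ℓ) * (innerProd n q x y - s)
          = (C.card:ℝ) * f0 + f1 * (∑ y ∈ C, krawQ n q 1 (innerProd n q x y))
            + f2 * (∑ y ∈ C, krawQ n q 2 (innerProd n q x y)) := by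
        intro x
        rw [show ∑ y ∈ C, (innerProd n q x y - ℓ) * (innerProd n q x y - s)
            = ∑ y ∈ C, (f0 + f1 * krawQ n q 1 (innerProd n q x y)
                + f2 * krawQ n q 2 (innerProd n q x y)) from
          Finset.sum_congr rfl fun y _ => hid (innerProd n q x y)]
        rw [Finset.sum_add_distrib, Finset.sum_add_distrib, Finset.sum_const,
          ← Finset.mul_sum, ← Finset.mul_sum, nsmul_eq_mul]
      rw [Finset.sum_congr rfl fun x _ => inner x]
      rw [Finset.sum_add_distrib, Finset.sum_add_distrib, Finset.sum_const,
        ← Finset.mul_sum, ← Finset.mul_sum, nsmul_eq_mul]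
      ring
    rw [hGid]
    nlinarith [mul_nonneg hf1 hS1, mul_nonneg hf2 hS2]
  -- upper bound on G
  have hGup : ∑ x ∈ C, ∑ y ∈ C, (innerProd n q x y - ℓ) * (innerProd n q x y - s)
      ≤ (C.card:ℝ) * ((1-ℓ)*(1-s)) := by
    have hx : ∀ x ∈ C, ∑ y ∈ C, (innerProd n q x y - ℓ) * (innerProd n q x y - s)
        ≤ (1-ℓ)*(1-s) := by
      intro x hxC
      rw [← Finset.add_sum_erase C _ hxC]
      have hself : innerProd n q x x = 1 := by
        simp [innerProd, hammingDist_self]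
      have hrest : ∑ y ∈ C.erase x, (innerProd n q x y - ℓ) * (innerProd n q x y - s) ≤ 0 := by
        apply Finset.sum_nonpos
        intro y hy
        obtain ⟨hyx, hyC⟩ := Finset.mem_erase.mp hy
        have h := hC x hxC y hyC (Ne.symm hyx)
        exact mul_nonpos_of_nonneg_of_nonpos (by linarith [h.1]) (by linarith [h.2])
      rw [hself]
      linarith
    calc ∑ x ∈ C, ∑ y ∈ C, (innerProd n q x y - ℓ) * (innerProd n q x y - s)
        ≤ ∑ _x ∈ C, (1-ℓ)*(1-s) := Finset.sum_le_sum hx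
      _ = (C.card:ℝ) * ((1-ℓ)*(1-s)) := by rw [Finset.sum_const, nsmul_eq_mul]
  -- combine
  have hM : f0 * (C.card:ℝ) ≤ (1-ℓ)*(1-s) := by
    rcases eq_or_lt_of_le (Nat.cast_nonneg (α := ℝ) C.card) with hM0 | hMpos
    · rw [← hM0]; nlinarith
    · have : f0 * (C.card:ℝ) * (C.card:ℝ) ≤ ((1-ℓ)*(1-s)) * (C.card:ℝ) := by nlinarith
      exact le_of_mul_le_mul_right this hMpos
  rw [le_div_iff₀ hden]
  calc (C.card:ℝ) * ((n : ℝ) * (q : ℝ) ^ 2 * (1 - s) * (1 - ℓ) +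
        4 * ((q : ℝ) - 1) * (1 - (n : ℝ)) + 2 * (n : ℝ) * (q : ℝ) * ((q : ℝ) - 1) * (s + ℓ))
      = (f0 * (C.card:ℝ)) * ((n:ℝ)*(q:ℝ)^2) := by rw [← hval]; ring
    _ ≤ ((1-ℓ)*(1-s)) * ((n:ℝ)*(q:ℝ)^2) := by
        apply mul_le_mul_of_nonneg_right hM (by positivity)
    _ = (n : ℝ) * (q : ℝ) ^ 2 * (1 - s) * (1 - ℓ) := by ring
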